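/- The generic interaction rule i↓: S{t} ⟹ S[R,¬R] is derivable from atomic interaction ai↓ and switch s, by induction on the structure R. -/

import Mathlib

/-- Structures of system SKS. -/
inductive Str : Type
  | f : Str
  | t : Str
  | atom (n : ℕ) : Str
  | or (A B : Str) : Str
  | and (A B : Str) : Str
  | neg (A : Str) : Str

/-- Positive contexts: a structure with one hole, not under a negation. -/
inductive Ctx : Type
  | hole : Ctx
  | orl (S : Ctx) (T : Str) : Ctx
  | orr (T : Str) (S : Ctx) : Ctx
  | andl (S : Ctx) (T : Str) : Ctx
  | andr (T : Str) (S : Ctx) : Ctx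

def Ctx.fill : Ctx → Str → Str
  | .hole, R => R
  | .orl S T, R => .or (S.fill R) T
  | .orr T S, R => .or T (S.fill R)
  | .andl S T, R => .and (S.fill R) T
  | .andr T S, R => .and T (S.fill R)

/-- Structural equivalence `=` of SKS. -/
inductive equiv : Str → Str → Prop
  | refl (R) : equiv R R
  | symm {A B} : equiv A B → equiv B A
  | trans {A B C} : equiv A B → equiv B C → equiv A C
  | or_congr {A B C D} : equiv A B → equiv C D → equiv (.or A C) (.or B D)
  | and_congr {A B C D} : equiv A B → equiv C D → equiv (.and A C) (.and B D)
  | neg_congr {A B} : equiv A B → equiv (.neg A) (.neg B)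
  | or_assoc (A B C) : equiv (.or (.or A B) C) (.or A (.or B C))
  | or_comm (A B) : equiv (.or A B) (.or B A)
  | and_assoc (A B C) : equiv (.and (.and A B) C) (.and A (.and B C))
  | and_comm (A B) : equiv (.and A B) (.and B A)
  | dm_or (A B) : equiv (.neg (.or A B)) (.and (.neg A) (.neg B))
  | dm_and (A B) : equiv (.neg (.and A B)) (.or (.neg A) (.neg B))
  | neg_neg (A) : equiv (.neg (.neg A)) A
  | neg_f : equiv (.neg .f) .t
  | neg_t : equiv (.neg .t) .f
  | or_f (R) : equiv (.or .f R) R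
  | and_t (R) : equiv (.and .t R) R
  | or_t_t : equiv (.or .t .t) .t
  | and_f_f : equiv (.and .f .f) .f

/-- Steps using only atomic interaction and switch. -/
inductive stepI : Str → Str → Prop
  | ai_down (S : Ctx) (a : ℕ) :
      stepI (S.fill .t) (S.fill (.or (.atom a) (.neg (.atom a))))
  | s (S : Ctx) (R U T : Str) :
      stepI (S.fill (.and (.or R U) T)) (S.fill (.or (.and R T) U))

inductive derivI : Str → Str → Prop
  | refl (R) : derivI R R
  | step {A B C} : stepI A B → derivI B C → derivI A C
  | eq {A B C} : equiv A B → derivI B C → derivI A C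

/-!
Rule instances apply in arbitrary contexts, so derivations can be plugged into a context and it
suffices to derive `t ⟹ [R, ¬R]`, by induction on `R`. Units follow by structural equivalence,
atoms by `ai↓`, and `¬A` from `A` since `¬¬A = A`. For `[A, B]` both instances are derived side by
side in `(t, t)`; for `(A, B)` the instance for `A` is derived in the unit of `(t, B)` inside
`[B, ¬B]`. Switches then bring the negated halves together, where De Morgan identifies them with
the negation of the compound.
-/

namespace Ctx

def comp : Ctx → Ctx → Ctx
  | .hole, T => T
  | .orl S U, T => .orl (S.comp T) U
  | .orr U S, T => .orr U (S.comp T)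
  | .andl S U, T => .andl (S.comp T) U
  | .andr U S, T => .andr U (S.comp T)

theorem fill_comp (S T : Ctx) (R : Str) : (S.comp T).fill R = S.fill (T.fill R) := by
  induction S <;> simp only [comp, fill, *]

end Ctx

namespace equiv

theorem fill (S : Ctx) {A B : Str} (h : equiv A B) : equiv (S.fill A) (S.fill B) := by
  induction S with
  | hole => exact h
  | orl S T ih => exact .or_congr ih (.refl T)
  | orr T S ih => exact .or_congr (.refl T) ih
  | andl S T ih => exact .and_congr ih (.refl T)
  | andr T S ih => exact .and_congr (.refl T) ih

end equiv

namespace stepI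

theorem fill (T : Ctx) {A B : Str} (h : stepI A B) : stepI (T.fill A) (T.fill B) := by
  cases h with
  | ai_down S a => simpa only [Ctx.fill_comp] using ai_down (T.comp S) a
  | s S R U V => simpa only [Ctx.fill_comp] using s (T.comp S) R U V

end stepI

namespace derivI

theorem trans {A B C : Str} (h₁ : derivI A B) (h₂ : derivI B C) : derivI A C := by
  induction h₁ with
  | refl => exact h₂
  | step s _ ih => exact .step s (ih h₂)
  | eq e _ ih => exact .eq e (ih h₂)

theorem of_equiv {A B : Str} (h : equiv A B) : derivI A B := .eq h (.refl B)

theorem of_stepI {A B : Str} (h : stepI A B) : derivI A B := .step h (.refl B)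

instance : Trans derivI derivI derivI := ⟨trans⟩

instance : Trans derivI equiv derivI := ⟨fun h e => h.trans (of_equiv e)⟩

theorem fill (T : Ctx) {A B : Str} (h : derivI A B) : derivI (T.fill A) (T.fill B) := by
  induction h with
  | refl => exact .refl _
  | step s _ ih => exact .step (s.fill T) ih
  | eq e _ ih => exact .eq (e.fill T) ih

theorem or_congr_left (T : Str) {A B : Str} (h : derivI A B) : derivI (.or A T) (.or B T) :=
  h.fill (.orl .hole T)

theorem and_congr_left (T : Str) {A B : Str} (h : derivI A B) : derivI (.and A T) (.and B T) :=
  h.fill (.andl .hole T)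

theorem and_congr_right (T : Str) {A B : Str} (h : derivI A B) : derivI (.and T A) (.and T B) :=
  h.fill (.andr T .hole)

theorem switch (R U T : Str) : derivI (.and (.or R U) T) (.or (.and R T) U) :=
  of_stepI (.s .hole R U T)

theorem interaction (R : Str) : derivI .t (.or R (.neg R)) := by
  induction R with
  | f => exact of_equiv (((equiv.or_f _).trans equiv.neg_f).symm)
  | t =>
    calc derivI .t (.or .f .t) := of_equiv ((equiv.or_f _).symm)
      equiv _ (.or .t .f) := equiv.or_comm _ _
      equiv _ (.or .t (.neg .t)) := .or_congr (.refl _) equiv.neg_t.symm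
  | atom a => exact of_stepI (.ai_down .hole a)
  | neg A ih =>
    calc derivI .t (.or A (.neg A)) := ih
      equiv _ (.or (.neg A) A) := equiv.or_comm _ _
      equiv _ (.or (.neg A) (.neg (.neg A))) := .or_congr (.refl _) (equiv.neg_neg A).symm
  | or A B ihA ihB =>
    calc derivI .t (.and .t .t) := of_equiv (equiv.and_t _).symm
      derivI _ (.and (.or A (.neg A)) .t) := ihA.and_congr_left _
      derivI _ (.and (.or A (.neg A)) (.or B (.neg B))) := ihB.and_congr_right _
      equiv _ (.and (.or (.neg A) A) (.or B (.neg B))) := .and_congr (.or_comm _ _) (.refl _)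
      derivI _ (.or (.and (.neg A) (.or B (.neg B))) A) := switch _ _ _
      equiv _ (.or (.and (.or (.neg B) B) (.neg A)) A) :=
        .or_congr ((equiv.and_comm _ _).trans (.and_congr (.or_comm _ _) (.refl _))) (.refl _)
      derivI _ (.or (.or (.and (.neg B) (.neg A)) B) A) := (switch _ _ _).or_congr_left _
      equiv _ (.or (.and (.neg B) (.neg A)) (.or B A)) := equiv.or_assoc _ _ _
      equiv _ (.or (.or B A) (.and (.neg B) (.neg A))) := equiv.or_comm _ _
      equiv _ (.or (.or A B) (.neg (.or A B))) :=
        .or_congr (.or_comm B A) ((equiv.and_comm _ _).trans (equiv.dm_or A B).symm)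
  | and A B ihA ihB =>
    calc derivI .t (.or B (.neg B)) := ihB
      equiv _ (.or (.and .t B) (.neg B)) := .or_congr (equiv.and_t B).symm (.refl _)
      derivI _ (.or (.and (.or A (.neg A)) B) (.neg B)) := (ihA.and_congr_left B).or_congr_left _
      derivI _ (.or (.or (.and A B) (.neg A)) (.neg B)) := (switch _ _ _).or_congr_left _
      equiv _ (.or (.and A B) (.or (.neg A) (.neg B))) := equiv.or_assoc _ _ _
      equiv _ (.or (.and A B) (.neg (.and A B))) := .or_congr (.refl _) (equiv.dm_and A B).symm

end derivI

/-- the generic interaction rule `i↓ : S{t} ⟹ S[R,¬R]`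
is derivable from atomic interaction and switch. -/
theorem generic_interaction_derivable (S : Ctx) (R : Str) :
    derivI (S.fill .t) (S.fill (.or R (.neg R))) :=
  (derivI.interaction R).fill S
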